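/- arXiv:2205.01970 — 4 statements merged into one kernel-verified Lean document; each statement's English description precedes it below -/
import Mathlib

section
/- For probability measures P and P' on a measurable space with P absolutely continuous with respect to P', the KL-divergence satisfies the Donsker–Varadhan variational formula: D_KL(P‖P') = sup over bounded measurable real-valued functions X with E_{P'}[exp(X)] < ∞ of (E_P[X] − log E_{P'}[exp(X)]). -/
open MeasureTheory Real Filter ENNReal

lemma clamp_abs_le (t n : ℝ) (hn : 0 ≤ n) : |max (min t n) (-n)| ≤ |t| := by
  refine abs_le.2 ⟨?_, ?_⟩
  · calc -|t| ≤ min t 0 := le_min (neg_abs_le t) (neg_nonpos.2 (abs_nonneg t))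
      _ ≤ min t n := min_le_min (le_refl t) hn
      _ ≤ max (min t n) (-n) := le_max_left _ _
  · exact max_le ((min_le_left _ _).trans (le_abs_self t))
      ((neg_nonpos.2 hn).trans (abs_nonneg t))

lemma clamp_eq_self (t n : ℝ) (hn : |t| ≤ n) : max (min t n) (-n) = t := by
  rw [min_eq_left ((le_abs_self t).trans hn),
    max_eq_left (le_trans (neg_le_neg hn) (neg_abs_le t))]

lemma clamp_lower (t n : ℝ) (hn : 0 ≤ n) :
    min (max t 0) n - max (-t) 0 ≤ max (min t n) (-n) := by
  rcases le_total 0 t with h | h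
  · rw [max_eq_left h, max_eq_right (neg_nonpos.2 h), sub_zero]
    exact (le_max_left _ _)
  · rw [max_eq_right h, min_eq_left hn, max_eq_left (neg_nonneg.2 h), zero_sub, neg_neg]
    exact le_max_of_le_left (le_of_eq (min_eq_left (h.trans hn)).symm)

lemma ennreal_ofReal_min (x y : ℝ) :
    ENNReal.ofReal (min x y) = min (ENNReal.ofReal x) (ENNReal.ofReal y) := by
  rcases le_total x y with h | h
  · rw [min_eq_left h, min_eq_left (ENNReal.ofReal_le_ofReal h)]
  · rw [min_eq_right h, min_eq_right (ENNReal.ofReal_le_ofReal h)]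

lemma ennreal_isup_min (a : ℝ≥0∞) : ⨆ n : ℕ, min a n = a := by
  refine le_antisymm (iSup_le fun n => min_le_left _ _) ?_
  rcases eq_or_ne a ⊤ with rfl | ha
  · have : (⨆ n : ℕ, min (⊤ : ℝ≥0∞) n) = ⨆ n : ℕ, (n : ℝ≥0∞) := by
      simp [min_eq_right le_top]
    rw [this, ENNReal.iSup_natCast]
  · obtain ⟨n, hn⟩ := ENNReal.exists_nat_gt ha
    exact le_trans (le_of_eq (min_eq_left hn.le).symm) (le_iSup (fun n : ℕ => min a n) n)

lemma dv_ptwise (d : ENNReal) (hd : d ≠ ⊤) :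
    d * ENNReal.ofReal (max (-Real.log d.toReal) 0) ≤ 1 := by
  rcases eq_or_ne d 0 with rfl | hd0
  · simp
  · have hx : 0 < d.toReal := ENNReal.toReal_pos hd0 hd
    have h1 : max (-Real.log d.toReal) 0 ≤ 1 / d.toReal := by
      apply max_le _ (by positivity)
      have := Real.log_le_sub_one_of_pos (x := 1 / d.toReal) (by positivity)
      rw [Real.log_div one_ne_zero hx.ne', Real.log_one] at this
      linarith [this]
    calc d * ENNReal.ofReal (max (-Real.log d.toReal) 0)
        ≤ d * ENNReal.ofReal (1 / d.toReal) := by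
          gcongr
      _ = ENNReal.ofReal d.toReal * ENNReal.ofReal (1 / d.toReal) := by
          rw [ENNReal.ofReal_toReal hd]
      _ = ENNReal.ofReal (d.toReal * (1 / d.toReal)) := by
          rw [ENNReal.ofReal_mul hx.le]
      _ = 1 := by rw [mul_one_div_cancel hx.ne', ENNReal.ofReal_one]

lemma dv_ptwise2 (d : ENNReal) (hd : d ≠ ⊤) (e : ℝ) (he : 0 ≤ e) :
    d * ENNReal.ofReal (e / d.toReal) ≤ ENNReal.ofReal e := by
  rcases eq_or_ne d 0 with rfl | hd0
  · simp
  · have hx : 0 < d.toReal := ENNReal.toReal_pos hd0 hd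
    calc d * ENNReal.ofReal (e / d.toReal)
        = ENNReal.ofReal (d.toReal * (e / d.toReal)) := by
          rw [ENNReal.ofReal_mul ENNReal.toReal_nonneg, ENNReal.ofReal_toReal hd]
      _ ≤ ENNReal.ofReal e := le_of_eq (by rw [mul_comm, div_mul_cancel₀ _ hx.ne'])

section DVAux
variable {Ω : Type*} [MeasurableSpace Ω] (P P' : Measure Ω)
  [IsProbabilityMeasure P] [IsProbabilityMeasure P']

lemma dv_upper (hPP' : P ≪ P')
    (h_int : Integrable (fun ω => Real.log ((P.rnDeriv P' ω).toReal)) P)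
    (X : Ω → ℝ) (hX : Measurable X) (C : ℝ) (hC : ∀ ω, |X ω| ≤ C)
    (hexp : Integrable (fun ω => Real.exp (X ω)) P') :
    ∫ ω, X ω ∂P - Real.log (∫ ω, Real.exp (X ω) ∂P')
      ≤ ∫ ω, Real.log ((P.rnDeriv P' ω).toReal) ∂P := by
  have hmg : Measurable fun ω => (P.rnDeriv P' ω).toReal :=
    (Measure.measurable_rnDeriv P P').ennreal_toReal
  set Z := ∫ ω, Real.exp (X ω) ∂P' with hZdef
  have hZ : 0 < Z := integral_exp_pos hexp
  set X' := fun ω => X ω - Real.log Z with hX'def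
  have hX'm : Measurable X' := hX.sub measurable_const
  have hintX : Integrable X P :=
    (integrable_const C).mono' hX.aestronglyMeasurable
      (ae_of_all _ fun ω => by simpa using hC ω)
  have hexpX'_eq : (fun ω => Real.exp (X' ω)) = fun ω => Real.exp (X ω) / Z := by
    funext ω; rw [hX'def]; rw [Real.exp_sub, Real.exp_log hZ]
  have hexp' : Integrable (fun ω => Real.exp (X' ω)) P' := by
    rw [hexpX'_eq]; exact hexp.div_const Z
  have hint1 : ∫ ω, Real.exp (X' ω) ∂P' = 1 := by
    rw [hexpX'_eq, integral_div, ← hZdef, div_self hZ.ne']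
  set h := fun ω => Real.exp (X' ω) / (P.rnDeriv P' ω).toReal with hhdef
  have hmh : Measurable h := (Real.measurable_exp.comp hX'm).div hmg
  have hnn : ∀ ω, 0 ≤ h ω := fun ω => by
    apply div_nonneg (Real.exp_nonneg _) ENNReal.toReal_nonneg
  have hlin : ∫⁻ ω, ENNReal.ofReal (h ω) ∂P ≤ ENNReal.ofReal 1 := by
    rw [← MeasureTheory.lintegral_rnDeriv_mul hPP'
      hmh.ennreal_ofReal.aemeasurable]
    calc ∫⁻ ω, P.rnDeriv P' ω * ENNReal.ofReal (h ω) ∂P'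
        ≤ ∫⁻ ω, ENNReal.ofReal (Real.exp (X' ω)) ∂P' := by
          refine lintegral_mono_ae ?_
          filter_upwards [Measure.rnDeriv_lt_top P P'] with ω hω
          exact dv_ptwise2 _ hω.ne _ (Real.exp_nonneg _)
      _ = ENNReal.ofReal (∫ ω, Real.exp (X' ω) ∂P') :=
          (ofReal_integral_eq_lintegral_ofReal hexp'
            (ae_of_all _ fun ω => Real.exp_nonneg _)).symm
      _ = ENNReal.ofReal 1 := by rw [hint1]
  have hint_h : Integrable h P :=
    ⟨hmh.aestronglyMeasurable, (hasFiniteIntegral_iff_ofReal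
      (ae_of_all _ hnn)).2 (lt_of_le_of_lt hlin (by simp))⟩
  have h_int_le : ∫ ω, h ω ∂P ≤ 1 := by
    rw [integral_eq_lintegral_of_nonneg_ae (ae_of_all _ hnn) hmh.aestronglyMeasurable]
    exact ENNReal.toReal_le_of_le_ofReal zero_le_one hlin
  -- pointwise inequality a.e. under P
  have hae : ∀ᵐ ω ∂P, X' ω - Real.log ((P.rnDeriv P' ω).toReal) ≤ h ω - 1 := by
    filter_upwards [Measure.rnDeriv_pos hPP',
      (Measure.rnDeriv_lt_top P P').filter_mono hPP'.ae_le] with ω h1 h2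
    have hg : 0 < (P.rnDeriv P' ω).toReal := ENNReal.toReal_pos h1.ne' h2.ne
    have := Real.log_le_sub_one_of_pos
      (show 0 < Real.exp (X' ω) / (P.rnDeriv P' ω).toReal by positivity)
    rwa [Real.log_div (Real.exp_ne_zero _) hg.ne', Real.log_exp] at this
  have hintX' : Integrable X' P := hintX.sub (integrable_const _)
  have hmono : ∫ ω, (X' ω - Real.log ((P.rnDeriv P' ω).toReal)) ∂P
      ≤ ∫ ω, (h ω - 1) ∂P :=
    integral_mono_ae (hintX'.sub h_int) (hint_h.sub (integrable_const 1)) hae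
  rw [integral_sub hintX' h_int, integral_sub hint_h (integrable_const 1),
    integral_sub hintX (integrable_const _)] at hmono
  simp only [integral_const, measure_univ, probReal_univ, one_smul, smul_eq_mul] at hmono
  linarith

lemma dv_negpart (hPP' : P ≪ P') :
    Integrable (fun ω => max (-Real.log ((P.rnDeriv P' ω).toReal)) 0) P := by
  have hmg : Measurable fun ω => (P.rnDeriv P' ω).toReal :=
    (Measure.measurable_rnDeriv P P').ennreal_toReal
  have hmeas : Measurable fun ω => max (-Real.log ((P.rnDeriv P' ω).toReal)) 0 :=
    ((Real.measurable_log.comp hmg).neg).max measurable_const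
  have hchg : ∫⁻ ω, ENNReal.ofReal (max (-Real.log ((P.rnDeriv P' ω).toReal)) 0) ∂P
      = ∫⁻ ω, P.rnDeriv P' ω * ENNReal.ofReal (max (-Real.log ((P.rnDeriv P' ω).toReal)) 0) ∂P' :=
    (MeasureTheory.lintegral_rnDeriv_mul hPP' (ENNReal.measurable_ofReal.comp hmeas).aemeasurable).symm
  have hfin : ∫⁻ ω, ENNReal.ofReal (max (-Real.log ((P.rnDeriv P' ω).toReal)) 0) ∂P < ⊤ := by
    rw [hchg]
    calc ∫⁻ ω, P.rnDeriv P' ω * ENNReal.ofReal (max (-Real.log ((P.rnDeriv P' ω).toReal)) 0) ∂P'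
        ≤ ∫⁻ _, 1 ∂P' := by
          refine lintegral_mono_ae ?_
          filter_upwards [Measure.rnDeriv_lt_top P P'] with ω hω
          exact dv_ptwise _ hω.ne
      _ < ⊤ := by simp
  exact ⟨hmeas.aestronglyMeasurable,
    (hasFiniteIntegral_iff_ofReal (ae_of_all _ fun ω => le_max_right _ _)).2 hfin⟩

end DVAux

/-- The Kullback–Leibler divergence `D_KL(P‖Q) = ∫ log (dP/dQ) dP`. -/
noncomputable def klDivergence {Ω : Type*} [MeasurableSpace Ω]
    (P Q : Measure Ω) : ℝ :=
  ∫ ω, Real.log ((P.rnDeriv Q ω).toReal) ∂P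

/-- Donsker–Varadhan variational formula: for probability measures `P ≪ P'`,
`D_KL(P‖P')` is the supremum over bounded measurable `X` with `E_{P'}[exp X] < ∞` of
`E_P[X] − log E_{P'}[exp X]`. -/
theorem klDivergence_eq_donskerVaradhan
    {Ω : Type*} [MeasurableSpace Ω]
    (P P' : Measure Ω) [IsProbabilityMeasure P] [IsProbabilityMeasure P']
    (hPP' : P ≪ P') :
    klDivergence P P' =
      sSup { r : ℝ | ∃ X : Ω → ℝ, Measurable X ∧ (∃ C : ℝ, ∀ ω, |X ω| ≤ C) ∧
        Integrable (fun ω => Real.exp (X ω)) P' ∧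
        r = ∫ ω, X ω ∂P - Real.log (∫ ω, Real.exp (X ω) ∂P') } := by
  classical
  set S := { r : ℝ | ∃ X : Ω → ℝ, Measurable X ∧ (∃ C : ℝ, ∀ ω, |X ω| ≤ C) ∧
        Integrable (fun ω => Real.exp (X ω)) P' ∧
        r = ∫ ω, X ω ∂P - Real.log (∫ ω, Real.exp (X ω) ∂P') } with hSdef
  set g := fun ω => (P.rnDeriv P' ω).toReal with hgdef
  have hmg : Measurable g := (Measure.measurable_rnDeriv P P').ennreal_toReal
  have hgpos : ∀ᵐ ω ∂P, 0 < g ω := by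
    filter_upwards [Measure.rnDeriv_pos hPP',
      (Measure.rnDeriv_lt_top P P').filter_mono hPP'.ae_le] with ω h1 h2
    exact ENNReal.toReal_pos h1.ne' h2.ne
  have hintg : Integrable g P' := Measure.integrable_toReal_rnDeriv
  have hintg1 : ∫ ω, g ω ∂P' = 1 := by
    rw [hgdef, Measure.integral_toReal_rnDeriv hPP', probReal_univ]
  -- the approximating sequence
  set Xn : ℕ → Ω → ℝ := fun n ω =>
    if g ω = 0 then -(n : ℝ) else max (min (Real.log (g ω)) n) (-(n : ℝ)) with hXndef
  have hXnm : ∀ n, Measurable (Xn n) := fun n =>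
    Measurable.ite (hmg (measurableSet_singleton 0)) measurable_const
      (((Real.measurable_log.comp hmg).min measurable_const).max measurable_const)
  have hXnb : ∀ n ω, |Xn n ω| ≤ (n : ℝ) := by
    intro n ω
    rw [hXndef]
    dsimp only
    split
    · simp
    · refine abs_le.2 ⟨le_max_right _ _, max_le ((min_le_right _ _)) ?_⟩
      exact neg_le_self (Nat.cast_nonneg n)
  have hexp_le : ∀ n ω, Real.exp (Xn n ω) ≤ g ω + 1 := by
    intro n ω
    have hg0 : 0 ≤ g ω := ENNReal.toReal_nonneg
    rw [hXndef]; dsimp only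
    split
    · rename_i h
      have h1 : Real.exp (-(n:ℝ)) ≤ 1 := by
        rw [Real.exp_le_one_iff]
        simp [Nat.cast_nonneg]
      linarith
    · rename_i h
      have hgp : 0 < g ω := lt_of_le_of_ne hg0 (Ne.symm h)
      have h1 : max (min (Real.log (g ω)) n) (-(n:ℝ)) ≤ max (Real.log (g ω)) 0 :=
        max_le_max (min_le_left _ _) (neg_nonpos.2 (Nat.cast_nonneg n))
      calc Real.exp (max (min (Real.log (g ω)) n) (-(n:ℝ)))
          ≤ Real.exp (max (Real.log (g ω)) 0) := Real.exp_le_exp.2 h1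
        _ = max (Real.exp (Real.log (g ω))) (Real.exp 0) :=
            Monotone.map_max Real.exp_monotone
        _ = max (g ω) 1 := by rw [Real.exp_log hgp, Real.exp_zero]
        _ ≤ g ω + 1 := max_le (by linarith) (by linarith)
  have hexpint : ∀ n, Integrable (fun ω => Real.exp (Xn n ω)) P' := by
    intro n
    refine (hintg.add (integrable_const 1)).mono'
      ((Real.measurable_exp.comp (hXnm n)).aestronglyMeasurable) (ae_of_all _ fun ω => ?_)
    rw [Real.norm_eq_abs, abs_of_pos (Real.exp_pos _)]
    exact hexp_le n ω
  have hXn_int : ∀ n, Integrable (Xn n) P := fun n =>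
    (integrable_const (n:ℝ)).mono' (hXnm n).aestronglyMeasurable
      (ae_of_all _ fun ω => by rw [Real.norm_eq_abs]; exact hXnb n ω)
  set Zn : ℕ → ℝ := fun n => ∫ ω, Real.exp (Xn n ω) ∂P' with hZndef
  have hZnpos : ∀ n, 0 < Zn n := fun n => integral_exp_pos (hexpint n)
  set rn : ℕ → ℝ := fun n => ∫ ω, Xn n ω ∂P - Real.log (Zn n) with hrndef
  have hmemS : ∀ n, rn n ∈ S := fun n => ⟨Xn n, hXnm n, ⟨n, hXnb n⟩, hexpint n, rfl⟩
  by_cases h_int : Integrable (fun ω => Real.log (g ω)) P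
  · -- integrable case
    rw [show klDivergence P P' = ∫ ω, Real.log (g ω) ∂P from rfl]
    -- E_P[Xn] → KL
    have tendsto_A : Tendsto (fun n => ∫ ω, Xn n ω ∂P) atTop
        (nhds (∫ ω, Real.log (g ω) ∂P)) := by
      refine tendsto_integral_of_dominated_convergence (fun ω => |Real.log (g ω)|)
        (fun n => (hXnm n).aestronglyMeasurable) h_int.abs (fun n => ?_) ?_
      · filter_upwards [hgpos] with ω hω
        rw [Real.norm_eq_abs, hXndef]; dsimp only
        rw [if_neg hω.ne']
        exact clamp_abs_le _ _ (Nat.cast_nonneg n)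
      · filter_upwards [hgpos] with ω hω
        refine Tendsto.congr' ?_ tendsto_const_nhds
        filter_upwards [eventually_ge_atTop ⌈|Real.log (g ω)|⌉₊] with n hn
        have hn' : |Real.log (g ω)| ≤ (n : ℝ) :=
          (Nat.le_ceil _).trans (Nat.cast_le.2 hn)
        rw [hXndef]; dsimp only
        rw [if_neg hω.ne', clamp_eq_self _ _ hn']
    -- Zn → 1
    have tendsto_Z : Tendsto Zn atTop (nhds 1) := by
      rw [← hintg1]
      refine tendsto_integral_of_dominated_convergence (fun ω => g ω + 1)
        (fun n => (Real.measurable_exp.comp (hXnm n)).aestronglyMeasurable)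
        (hintg.add (integrable_const 1)) (fun n => ae_of_all _ fun ω => ?_) ?_
      · rw [Real.norm_eq_abs, abs_of_pos (Real.exp_pos _)]; exact hexp_le n ω
      · refine ae_of_all _ fun ω => ?_
        rcases eq_or_ne (g ω) 0 with h0 | h0
        · have heq : (fun n : ℕ => Real.exp (Xn n ω)) = fun n => Real.exp (-1) ^ n := by
            funext n
            rw [hXndef]; dsimp only
            rw [if_pos h0, ← Real.exp_nat_mul]
            ring_nf
          rw [heq, h0]
          exact tendsto_pow_atTop_nhds_zero_of_lt_one (Real.exp_nonneg _)
            (Real.exp_lt_one_iff.2 (by norm_num))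
        · have hgp : 0 < g ω := lt_of_le_of_ne ENNReal.toReal_nonneg (Ne.symm h0)
          refine Tendsto.congr' ?_ tendsto_const_nhds
          filter_upwards [eventually_ge_atTop ⌈|Real.log (g ω)|⌉₊] with n hn
          have hn' : |Real.log (g ω)| ≤ (n : ℝ) :=
            (Nat.le_ceil _).trans (Nat.cast_le.2 hn)
          rw [hXndef]; dsimp only
          rw [if_neg h0, clamp_eq_self _ _ hn', Real.exp_log hgp]
    have tendsto_r : Tendsto rn atTop (nhds (∫ ω, Real.log (g ω) ∂P)) := by
      have hlog : Tendsto (fun n => Real.log (Zn n)) atTop (nhds (Real.log 1)) :=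
        (tendsto_Z.log one_ne_zero)
      rw [Real.log_one] at hlog
      have := tendsto_A.sub hlog
      simpa using this
    have hupper : ∀ r ∈ S, r ≤ ∫ ω, Real.log (g ω) ∂P := by
      rintro r ⟨X, hX, ⟨C, hC⟩, hexp, rfl⟩
      exact dv_upper P P' hPP' h_int X hX C hC hexp
    have hKL0 : 0 ≤ ∫ ω, Real.log (g ω) ∂P := by
      have := dv_upper P P' hPP' h_int (fun _ => 0) measurable_const 0 (by simp)
        (by simpa using integrable_const (1:ℝ))
      simpa using this
    have hbdd : BddAbove S := ⟨_, hupper⟩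
    refine le_antisymm ?_ (Real.sSup_le hupper hKL0)
    · exact le_of_tendsto tendsto_r (Eventually.of_forall fun n => le_csSup hbdd (hmemS n))
  · -- non-integrable case: both sides are 0 (junk values)
    rw [klDivergence, integral_undef h_int]
    have hnb : ¬ BddAbove S := by
      rintro ⟨M, hM⟩
      have hneg := dv_negpart P P' hPP'
      set Iφ : ℝ := ∫ ω, max (-Real.log (g ω)) 0 ∂P with hIφ
      -- positive part has infinite lintegral
      have hmax_meas : Measurable fun ω => max (Real.log (g ω)) 0 :=
        (Real.measurable_log.comp hmg).max measurable_const
      have hpos_top : ∫⁻ ω, ENNReal.ofReal (max (Real.log (g ω)) 0) ∂P = ⊤ := by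
        by_contra hfin
        have hpos_int : Integrable (fun ω => max (Real.log (g ω)) 0) P :=
          ⟨hmax_meas.aestronglyMeasurable,
            (hasFiniteIntegral_iff_ofReal (ae_of_all _ fun ω => le_max_right _ _)).2
              (lt_top_iff_ne_top.2 hfin)⟩
        exact h_int ((hpos_int.sub hneg).congr
          (ae_of_all _ fun ω => max_zero_sub_max_neg_zero_eq_self _))
      set ψ : ℕ → Ω → ℝ≥0∞ := fun n ω =>
        min (ENNReal.ofReal (max (Real.log (g ω)) 0)) n with hψdef
      have hψm : ∀ n, Measurable (ψ n) := fun n =>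
        (ENNReal.measurable_ofReal.comp hmax_meas).min measurable_const
      have hψmono : Monotone ψ := by
        intro a b hab ω
        exact min_le_min (le_refl _) (Nat.cast_le.2 hab)
      have hsup : (⨆ n, ∫⁻ ω, ψ n ω ∂P) = ⊤ := by
        rw [← lintegral_iSup hψm hψmono]
        have : ∀ ω, (⨆ n, ψ n ω) = ENNReal.ofReal (max (Real.log (g ω)) 0) :=
          fun ω => ennreal_isup_min _
        calc ∫⁻ ω, ⨆ n, ψ n ω ∂P
            = ∫⁻ ω, ENNReal.ofReal (max (Real.log (g ω)) 0) ∂P :=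
              lintegral_congr this
          _ = ⊤ := hpos_top
      set B : ℝ := max (M + Iφ + Real.log 2 + 1) 0 with hBdef
      have : ENNReal.ofReal B < ⨆ n, ∫⁻ ω, ψ n ω ∂P := by
        rw [hsup]; exact ENNReal.ofReal_lt_top
      obtain ⟨n, hn⟩ := lt_iSup_iff.1 this
      -- integrability of the truncated positive part
      have hminb : ∀ ω, |min (max (Real.log (g ω)) 0) (n:ℝ)| ≤ (n:ℝ) := fun ω => by
        rw [abs_of_nonneg (le_min (le_max_right _ _) (Nat.cast_nonneg n))]
        exact min_le_right _ _
      have hmin_int : Integrable (fun ω => min (max (Real.log (g ω)) 0) (n:ℝ)) P :=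
        (integrable_const (n:ℝ)).mono'
          ((hmax_meas.min measurable_const).aestronglyMeasurable)
          (ae_of_all _ fun ω => by rw [Real.norm_eq_abs]; exact hminb ω)
      -- lower bound on ∫ Xn
      have hA : ∫ ω, (min (max (Real.log (g ω)) 0) (n:ℝ) - max (-Real.log (g ω)) 0) ∂P
          ≤ ∫ ω, Xn n ω ∂P := by
        refine integral_mono_ae (hmin_int.sub hneg) (hXn_int n) ?_
        filter_upwards [hgpos] with ω hω
        rw [hXndef]; dsimp only
        rw [if_neg hω.ne']
        exact clamp_lower _ _ (Nat.cast_nonneg n)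
      have hfinψ : ∫⁻ ω, ψ n ω ∂P ≠ ⊤ := by
        refine ne_top_of_le_ne_top ?_ (lintegral_mono fun ω => min_le_right _ _)
        rw [lintegral_const, measure_univ, mul_one]
        exact ENNReal.natCast_ne_top n
      have hmin_eq : ∫ ω, min (max (Real.log (g ω)) 0) (n:ℝ) ∂P
          = (∫⁻ ω, ψ n ω ∂P).toReal := by
        rw [integral_eq_lintegral_of_nonneg_ae
          (f := fun ω => min (max (Real.log (g ω)) 0) (n:ℝ))
          (ae_of_all _ fun ω => le_min (le_max_right _ _) (Nat.cast_nonneg n))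
          ((hmax_meas.min measurable_const).aestronglyMeasurable)]
        congr 1
        refine lintegral_congr fun ω => ?_
        rw [ennreal_ofReal_min, ENNReal.ofReal_natCast]
      have hbig : B < (∫⁻ ω, ψ n ω ∂P).toReal :=
        (ENNReal.ofReal_lt_iff_lt_toReal (le_max_right _ 0) hfinψ).1 hn
      -- Zn ≤ 2 so log Zn ≤ log 2
      have hZle : Zn n ≤ 2 := by
        have h2 : ∫ ω, (g ω + 1) ∂P' = 2 := by
          rw [integral_add hintg (integrable_const 1), hintg1, integral_const,
            probReal_univ, one_smul]
          norm_num
        calc Zn n ≤ ∫ ω, (g ω + 1) ∂P' :=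
              integral_mono (hexpint n) (hintg.add (integrable_const 1))
                (fun ω => hexp_le n ω)
          _ = 2 := h2
      have hlogZ : Real.log (Zn n) ≤ Real.log 2 :=
        Real.log_le_log (hZnpos n) hZle
      have hrnM : rn n ≤ M := hM (hmemS n)
      have hsub : ∫ ω, (min (max (Real.log (g ω)) 0) (n:ℝ) - max (-Real.log (g ω)) 0) ∂P
          = (∫⁻ ω, ψ n ω ∂P).toReal - Iφ := by
        rw [integral_sub hmin_int hneg, hmin_eq, hIφ]
      have hBle : M + Iφ + Real.log 2 + 1 ≤ B := le_max_left _ _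
      rw [hrndef] at hrnM
      dsimp only at hrnM
      rw [hsub] at hA
      linarith
    rw [csSup_of_not_bddAbove hnb, Real.sSup_empty]
end

section
/- Let θ_t be a discrete random variable, let X_{t+1} be an independent copy of θ_0, B_{t+1} ~ Bernoulli(q) independent of everything else, H_t arbitrary observations independent of (B_{t+1}, X_{t+1}) given θ_t, and θ_{t+1} = (1−B_{t+1})θ_t + B_{t+1} X_{t+1}. Then H(θ_{t+1}|H_t) − H(θ_t|H_t) ≤ H(B_{t+1}) + q·H(θ_0). -/
open MeasureTheory ProbabilityTheory Real

/-- Shannon entropy (in nats) of a random variable `X` taking values in a finite type. -/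
noncomputable def ent {Ω S : Type*} [MeasurableSpace Ω] [Fintype S]
    (μ : Measure Ω) (X : Ω → S) : ℝ :=
  - ∑ s : S, (μ (X ⁻¹' {s})).toReal * Real.log (μ (X ⁻¹' {s})).toReal

/-- Conditional entropy `H(X | Y)`. -/
noncomputable def condEnt {Ω S T : Type*} [MeasurableSpace Ω] [Fintype S] [Fintype T]
    (μ : Measure Ω) (X : Ω → S) (Y : Ω → T) : ℝ :=
  ent μ (fun ω => (X ω, Y ω)) - ent μ Y

/-- Mutual information `I(X ; Y)`. -/
noncomputable def mi {Ω S T : Type*} [MeasurableSpace Ω] [Fintype S] [Fintype T]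
    (μ : Measure Ω) (X : Ω → S) (Y : Ω → T) : ℝ :=
  ent μ X - condEnt μ X Y

/-- Conditional mutual information `I(X ; Y | Z)`. -/
noncomputable def condMI {Ω S T U : Type*} [MeasurableSpace Ω] [Fintype S] [Fintype T] [Fintype U]
    (μ : Measure Ω) (X : Ω → S) (Y : Ω → T) (Z : Ω → U) : ℝ :=
  condEnt μ X Z - condEnt μ X (fun ω => (Y ω, Z ω))

/-- `X` and `Z` are conditionally independent given `Y`:
`P(X = s, Z = u | Y = t) = P(X = s | Y = t) * P(Z = u | Y = t)` for every `s, t, u`. -/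
def CondIndepDiscrete {Ω S T U : Type*} [MeasurableSpace Ω] [Fintype S] [Fintype T] [Fintype U]
    (μ : Measure Ω) (X : Ω → S) (Z : Ω → U) (Y : Ω → T) : Prop :=
  ∀ (s : S) (u : U) (t : T),
    μ (X ⁻¹' {s} ∩ Z ⁻¹' {u} ∩ Y ⁻¹' {t}) * μ (Y ⁻¹' {t}) =
      μ (X ⁻¹' {s} ∩ Y ⁻¹' {t}) * μ (Z ⁻¹' {u} ∩ Y ⁻¹' {t})

/-! Forgetting `B` can only lower entropy, so `H(θ', H) ≤ H(B, θ', H)`. By the independence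
assumptions the law of `(B, θ', H)` is `q · P_X ⊗ P_H` on `{B = true}` and `(1 - q) · P_(θ, H)` on
`{B = false}`, whence `H(B, θ', H) = H(B) + q (H(X) + H(H)) + (1 - q) H(θ, H)`. As `H(H) ≤ H(θ, H)`,
the increase `H(θ', H) - H(θ, H)` is at most `H(B) + q H(X)`, and `X` has the law of `θ₀`. -/

lemma negMulLog_sum_le {ι : Type*} (s : Finset ι) {a : ι → ℝ} (ha : ∀ i ∈ s, 0 ≤ a i) :
    negMulLog (∑ i ∈ s, a i) ≤ ∑ i ∈ s, negMulLog (a i) := by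
  simp only [negMulLog, neg_mul, Finset.sum_mul, ← Finset.sum_neg_distrib]
  refine Finset.sum_le_sum fun i hi => ?_
  rcases (ha i hi).eq_or_lt with hzero | hpos
  · simp [← hzero]
  · have := log_le_log hpos (Finset.single_le_sum ha hi)
    nlinarith

section

variable {Ω : Type*} [MeasurableSpace Ω] (μ : Measure Ω)

lemma ent_eq_sum_negMulLog {A : Type*} [Fintype A] (Z : Ω → A) :
    ent μ Z = ∑ a, negMulLog (μ.real (Z ⁻¹' {a})) := by
  simp [ent, negMulLog, measureReal_def, Finset.sum_neg_distrib]

lemma ent_congr {A : Type*} [Fintype A] {Z Z' : Ω → A}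
    (h : ∀ a, μ (Z ⁻¹' {a}) = μ (Z' ⁻¹' {a})) : ent μ Z = ent μ Z' := by
  simp only [ent, h]

variable {A : Type*} [Fintype A] [MeasurableSpace A] [MeasurableSingletonClass A]

lemma ent_comp_le [IsFiniteMeasure μ] {C : Type*} [Fintype C] {Z : Ω → A} (hZ : Measurable Z)
    (g : A → C) : ent μ (fun ω => g (Z ω)) ≤ ent μ Z := by
  classical
  rw [ent_eq_sum_negMulLog, ent_eq_sum_negMulLog, ← Finset.sum_fiberwise Finset.univ g]
  refine Finset.sum_le_sum fun c _ => ?_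
  have hfiber : (fun ω => g (Z ω)) ⁻¹' {c} = Z ⁻¹' ↑(Finset.univ.filter fun a => g a = c) := by
    ext ω; simp
  rw [hfiber, ← sum_measureReal_preimage_singleton _ fun a _ => hZ (measurableSet_singleton a)]
  exact negMulLog_sum_le _ fun a _ => measureReal_nonneg

variable [IsProbabilityMeasure μ]

lemma sum_measureReal_preimage_singleton_eq_one {Z : Ω → A} (hZ : Measurable Z) :
    ∑ a, μ.real (Z ⁻¹' {a}) = 1 := by
  rw [sum_measureReal_preimage_singleton _ fun a _ => hZ (measurableSet_singleton a)]
  simp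

lemma sum_negMulLog_mul_measureReal (c : ℝ) {Z : Ω → A} (hZ : Measurable Z) :
    ∑ a, negMulLog (c * μ.real (Z ⁻¹' {a})) = negMulLog c + c * ent μ Z := by
  simp only [negMulLog_mul, Finset.sum_add_distrib, ← Finset.sum_mul, ← Finset.mul_sum,
    sum_measureReal_preimage_singleton_eq_one μ hZ, one_mul, ent_eq_sum_negMulLog]

end

section

variable {Ω S V : Type*} [MeasurableSpace Ω] (μ : Measure Ω)
  [MeasurableSpace S] [MeasurableSingletonClass S] [MeasurableSpace V] [MeasurableSingletonClass V]
  {B : Ω → Bool} {X Y : Ω → S} {H : Ω → V}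

lemma measureReal_switch_true (hindep : IndepFun (fun ω => (B ω, X ω)) (fun ω => (Y ω, H ω)) μ)
    (hBX : IndepFun B X μ) (s : S) (v : V) :
    μ.real ((fun ω => (B ω, (if B ω then X ω else Y ω), H ω)) ⁻¹' {(true, s, v)}) =
      μ.real (B ⁻¹' {true}) * μ.real (X ⁻¹' {s}) * μ.real (H ⁻¹' {v}) := by
  have hset : (fun ω => (B ω, (if B ω then X ω else Y ω), H ω)) ⁻¹' {(true, s, v)} =
      (fun ω => (B ω, X ω)) ⁻¹' {(true, s)} ∩ H ⁻¹' {v} := by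
    ext ω; cases h : B ω <;> simp [h]
  have hpair : (fun ω => (B ω, X ω)) ⁻¹' {(true, s)} = B ⁻¹' {true} ∩ X ⁻¹' {s} := by
    ext ω; simp
  have hindep' : IndepFun (fun ω => (B ω, X ω)) H μ := hindep.comp measurable_id measurable_snd
  rw [measureReal_def, hset, hindep'.measure_inter_preimage_eq_mul _ _
    (measurableSet_singleton _) (measurableSet_singleton _), hpair,
    hBX.measure_inter_preimage_eq_mul _ _ (measurableSet_singleton _) (measurableSet_singleton _)]
  simp only [ENNReal.toReal_mul, measureReal_def]

lemma measureReal_switch_false (hindep : IndepFun (fun ω => (B ω, X ω)) (fun ω => (Y ω, H ω)) μ)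
    (p : S × V) :
    μ.real ((fun ω => (B ω, (if B ω then X ω else Y ω), H ω)) ⁻¹' {(false, p)}) =
      μ.real (B ⁻¹' {false}) * μ.real ((fun ω => (Y ω, H ω)) ⁻¹' {p}) := by
  have hset : (fun ω => (B ω, (if B ω then X ω else Y ω), H ω)) ⁻¹' {(false, p)} =
      B ⁻¹' {false} ∩ (fun ω => (Y ω, H ω)) ⁻¹' {p} := by
    ext ω; cases h : B ω <;> simp [h]
  have hindep' : IndepFun B (fun ω => (Y ω, H ω)) μ := hindep.comp measurable_fst measurable_id
  rw [measureReal_def, hset, hindep'.measure_inter_preimage_eq_mul _ _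
    (measurableSet_singleton _) (measurableSet_singleton _), ENNReal.toReal_mul]
  rfl

variable [IsProbabilityMeasure μ] [Fintype S] [Fintype V]

lemma ent_switch (hX : Measurable X) (hY : Measurable Y) (hH : Measurable H)
    (hindep : IndepFun (fun ω => (B ω, X ω)) (fun ω => (Y ω, H ω)) μ) (hBX : IndepFun B X μ) :
    ent μ (fun ω => (B ω, (if B ω then X ω else Y ω), H ω)) =
      ent μ B + μ.real (B ⁻¹' {true}) * (ent μ X + ent μ H) +
        μ.real (B ⁻¹' {false}) * ent μ (fun ω => (Y ω, H ω)) := by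
  rw [ent_eq_sum_negMulLog, Fintype.sum_prod_type, Fintype.sum_bool, Fintype.sum_prod_type]
  simp only [measureReal_switch_true μ hindep hBX, measureReal_switch_false μ hindep,
    sum_negMulLog_mul_measureReal μ _ hH, sum_negMulLog_mul_measureReal μ _ (hY.prodMk hH)]
  rw [Finset.sum_add_distrib, sum_negMulLog_mul_measureReal μ _ hX, ← Finset.sum_mul,
    ← Finset.mul_sum, sum_measureReal_preimage_singleton_eq_one μ hX, ent_eq_sum_negMulLog μ B,
    Fintype.sum_bool]
  ring

end

theorem condEnt_increase_le_general
    {Ω S V : Type*} [MeasurableSpace Ω]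
    [Fintype S] [MeasurableSpace S] [MeasurableSingletonClass S]
    [Fintype V] [MeasurableSpace V] [MeasurableSingletonClass V]
    (μ : Measure Ω) [IsProbabilityMeasure μ]
    (θt θ0 X : Ω → S) (B : Ω → Bool) (Ht : Ω → V) (q : ℝ)
    (hθt : Measurable θt) (hX : Measurable X)
    (hB : Measurable B) (hHt : Measurable Ht)
    (hq0 : 0 ≤ q)
    (hBq : μ (B ⁻¹' {true}) = ENNReal.ofReal q)
    (hindep : IndepFun (fun ω => (B ω, X ω)) (fun ω => (θt ω, Ht ω)) μ)
    (hBX : IndepFun B X μ)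
    (hid : ∀ s : S, μ (X ⁻¹' {s}) = μ (θ0 ⁻¹' {s})) :
    condEnt μ (fun ω => if B ω then X ω else θt ω) Ht - condEnt μ θt Ht ≤
      ent μ B + q * ent μ θ0 := by
  have htrue : μ.real (B ⁻¹' {true}) = q := by
    rw [measureReal_def, hBq, ENNReal.toReal_ofReal hq0]
  have hfalse : μ.real (B ⁻¹' {false}) = 1 - q := by
    have := sum_measureReal_preimage_singleton_eq_one μ hB
    rw [Fintype.sum_bool] at this
    linarith
  have hswitched : Measurable fun ω => if B ω then X ω else θt ω :=
    Measurable.ite (hB (measurableSet_singleton true)) hX hθt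
  have hswitch := ent_switch μ hX hθt hHt hindep hBX
  rw [htrue, hfalse, ent_congr μ hid] at hswitch
  have hforget_B : ent μ (fun ω => ((if B ω then X ω else θt ω), Ht ω)) ≤
      ent μ (fun ω => (B ω, (if B ω then X ω else θt ω), Ht ω)) :=
    ent_comp_le μ (hB.prodMk (hswitched.prodMk hHt)) Prod.snd
  have hforget_θ : ent μ Ht ≤ ent μ (fun ω => (θt ω, Ht ω)) :=
    ent_comp_le μ (hθt.prodMk hHt) Prod.snd
  rw [condEnt, condEnt]
  linarith [mul_le_mul_of_nonneg_left hforget_θ hq0]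

/-- With `θ_{t+1} = (1−B_{t+1})θ_t + B_{t+1}X_{t+1}`, where `(B_{t+1}, X_{t+1})` is
independent of `(θ_t, H_t)`, `B_{t+1} ~ Bernoulli(q)`, and `X_{t+1}` distributed as `θ_0`, we have
`H(θ_{t+1}|H_t) − H(θ_t|H_t) ≤ H(B_{t+1}) + q·H(θ_0)`. -/
theorem condEnt_increase_le
    {Ω S V : Type*} [MeasurableSpace Ω]
    [Fintype S] [MeasurableSpace S] [MeasurableSingletonClass S]
    [Fintype V] [MeasurableSpace V] [MeasurableSingletonClass V]
    (μ : Measure Ω) [IsProbabilityMeasure μ]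
    (θt θ0 X : Ω → S) (B : Ω → Bool) (Ht : Ω → V) (q : ℝ)
    (hθt : Measurable θt) (hθ0 : Measurable θ0) (hX : Measurable X)
    (hB : Measurable B) (hHt : Measurable Ht)
    (hq0 : 0 ≤ q) (hq1 : q ≤ 1)
    (hBq : μ (B ⁻¹' {true}) = ENNReal.ofReal q)
    (hindep : IndepFun (fun ω => (B ω, X ω)) (fun ω => (θt ω, Ht ω)) μ)
    (hBX : IndepFun B X μ)
    (hid : ∀ s : S, μ (X ⁻¹' {s}) = μ (θ0 ⁻¹' {s})) :
    condEnt μ (fun ω => if B ω then X ω else θt ω) Ht - condEnt μ θt Ht ≤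
      ent μ B + q * ent μ θ0 :=
  condEnt_increase_le_general μ θt θ0 X B Ht q hθt hX hB hHt hq0 hBq hindep hBX hid
end

section
/- Let (R_t)_{t≥1} be a sequence of random reward vectors in ℝ^A (A a finite set) whose joint distribution is invariant under time shifts and time reversal, i.e., (R_1,…,R_T) has the same distribution as (R_T,…,R_1) for every T. Then for every T, ∑_{t=0}^{T−1} E[max_a E[R_{t+1,a} | R_{1:t}]] = ∑_{t=0}^{T−1} E[max_a E[R_{t+1,a} | R_{t+2:T}]]. -/
open MeasureTheory ProbabilityTheory Finset


lemma condexp_comp_map {Ω γ : Type*} [MeasurableSpace Ω] {m' : MeasurableSpace γ}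
    [mγ : MeasurableSpace γ]
    (μ : Measure Ω) [IsProbabilityMeasure μ] {Z : Ω → γ} (hZ : Measurable Z)
    (hm' : m' ≤ mγ) {f : γ → ℝ} (hf : Integrable f (μ.map Z)) :
    (fun ω => ((μ.map Z)[f | m']) (Z ω)) =ᵐ[μ] μ[(fun ω => f (Z ω)) | m'.comap Z] := by
  have hZae : AEMeasurable Z μ := hZ.aemeasurable
  have : IsProbabilityMeasure (μ.map Z) := Measure.isProbabilityMeasure_map hZae
  have hcle : m'.comap Z ≤ ‹MeasurableSpace Ω› :=
    le_trans (MeasurableSpace.comap_mono hm') hZ.comap_le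
  have hfZ : Integrable (fun ω => f (Z ω)) μ :=
    (integrable_map_measure hf.aestronglyMeasurable hZae).mp hf
  have hce : Integrable ((μ.map Z)[f | m']) (μ.map Z) := integrable_condExp
  have hceZ : Integrable (fun ω => ((μ.map Z)[f | m']) (Z ω)) μ :=
    (integrable_map_measure hce.aestronglyMeasurable hZae).mp hce
  refine ae_eq_condExp_of_forall_setIntegral_eq hcle hfZ
    (fun s _ _ => hceZ.integrableOn) (fun s hs _ => ?_) ?_
  · obtain ⟨t, htm, rfl⟩ := hs
    have htm' : MeasurableSet t := hm' _ htm
    rw [show Z ⁻¹' t = Z ⁻¹' t from rfl]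
    rw [← setIntegral_map htm' hce.aestronglyMeasurable hZae,
      ← setIntegral_map htm' hf.aestronglyMeasurable hZae,
      setIntegral_condExp hm' hf htm]
  · exact StronglyMeasurable.aestronglyMeasurable
      ((stronglyMeasurable_condExp).comp_measurable (comap_measurable Z))

noncomputable def Dval (A : Type*) [Fintype A] [Nonempty A] (β : Type*) [MeasurableSpace β]
    (ν : Measure ((A → ℝ) × β)) : ℝ :=
  ∫ p, ⨆ a, (ν[(fun q : (A → ℝ) × β => q.1 a) |
    MeasurableSpace.comap Prod.snd inferInstance]) p ∂ν

lemma integral_iSup_condexp_comap {Ω : Type*} [MeasurableSpace Ω] (μ : Measure Ω)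
    [IsProbabilityMeasure μ] {A : Type*} [Fintype A] [Nonempty A]
    {β : Type*} [mβ : MeasurableSpace β]
    {X : Ω → A → ℝ} (hX : Measurable X) (hXi : ∀ a, Integrable (fun ω => X ω a) μ)
    {Y : Ω → β} (hY : Measurable Y) :
    ∫ ω, ⨆ a, (μ[(fun ω' => X ω' a) | mβ.comap Y]) ω ∂μ
      = Dval A β (μ.map (fun ω => (X ω, Y ω))) := by
  set Z : Ω → (A → ℝ) × β := fun ω => (X ω, Y ω) with hZdef
  have hZ : Measurable Z := hX.prodMk hY
  set ν := μ.map Z with hν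
  have hprob : IsProbabilityMeasure ν := Measure.isProbabilityMeasure_map hZ.aemeasurable
  have hm' : (MeasurableSpace.comap (Prod.snd : (A → ℝ) × β → β) mβ)
      ≤ (inferInstance : MeasurableSpace ((A → ℝ) × β)) :=
    measurable_snd.comap_le
  have hfa : ∀ a, Integrable (fun q : (A → ℝ) × β => q.1 a) ν := fun a =>
    (integrable_map_measure
      (((measurable_pi_apply a).comp measurable_fst).aestronglyMeasurable)
      hZ.aemeasurable).mpr (hXi a)
  have hσ : (MeasurableSpace.comap (Prod.snd : (A → ℝ) × β → β) mβ).comap Z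
      = mβ.comap Y := by
    rw [MeasurableSpace.comap_comp]; rfl
  have h : ∀ a,
      (fun ω => (ν[(fun q : (A → ℝ) × β => q.1 a) |
          MeasurableSpace.comap Prod.snd mβ]) (Z ω))
        =ᵐ[μ] μ[(fun ω' => X ω' a) | mβ.comap Y] := by
    intro a
    have h1 := condexp_comp_map μ hZ hm' (hfa a)
    rw [hσ] at h1
    exact h1
  have hall : ∀ᵐ ω ∂μ, ∀ a,
      (ν[(fun q : (A → ℝ) × β => q.1 a) | MeasurableSpace.comap Prod.snd mβ]) (Z ω)
        = (μ[(fun ω' => X ω' a) | mβ.comap Y]) ω := ae_all_iff.mpr h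
  have hg : Measurable fun p => ⨆ a,
      (ν[(fun q : (A → ℝ) × β => q.1 a) | MeasurableSpace.comap Prod.snd mβ]) p :=
    Measurable.iSup fun a => (stronglyMeasurable_condExp.mono hm').measurable
  calc ∫ ω, ⨆ a, (μ[(fun ω' => X ω' a) | mβ.comap Y]) ω ∂μ
      = ∫ ω, (fun p => ⨆ a, (ν[(fun q : (A → ℝ) × β => q.1 a) |
          MeasurableSpace.comap Prod.snd mβ]) p) (Z ω) ∂μ :=
        integral_congr_ae (hall.mono fun ω hω => (iSup_congr hω).symm)
    _ = ∫ p, ⨆ a, (ν[(fun q : (A → ℝ) × β => q.1 a) |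
          MeasurableSpace.comap Prod.snd mβ]) p ∂ν :=
        (integral_map hZ.aemeasurable hg.aestronglyMeasurable).symm
    _ = Dval A β ν := rfl

lemma Dval_map_reindex {A : Type*} [Fintype A] [Nonempty A] {β : Type*} [mβ : MeasurableSpace β]
    (ν : Measure ((A → ℝ) × β)) [IsProbabilityMeasure ν]
    (hXi : ∀ a, Integrable (fun p : (A → ℝ) × β => p.1 a) ν)
    {r : β → β} (hr : Measurable r) (hrr : mβ.comap r = mβ) :
    Dval A β (ν.map (Prod.map id r)) = Dval A β ν := by
  have h1 := integral_iSup_condexp_comap ν (A := A) (X := fun p : (A → ℝ) × β => p.1)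
      measurable_fst hXi (Y := fun p : (A → ℝ) × β => r p.2) (hr.comp measurable_snd)
  have hσ : mβ.comap (fun p : (A → ℝ) × β => r p.2)
      = MeasurableSpace.comap Prod.snd mβ := by
    have := (MeasurableSpace.comap_comp (m := mβ) (f := r)
      (g := (Prod.snd : (A → ℝ) × β → β)))
    rw [show r ∘ (Prod.snd : (A → ℝ) × β → β) = fun p : (A → ℝ) × β => r p.2 from rfl] at this
    rw [← this, hrr]
  rw [hσ] at h1
  have h2 : (fun p : (A → ℝ) × β => ((fun p : (A → ℝ) × β => p.1) p, r p.2))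
      = Prod.map id r := rfl
  rw [h2] at h1
  exact h1.symm.trans rfl

/-- for a sequence of reward vectors whose joint law is invariant under time
shifts and time reversal, the sum of expected maxima of conditional expectations given the past
equals the one given the future:
`∑_{t<T} E[max_a E[R_{t+1,a} | R_{1:t}]] = ∑_{t<T} E[max_a E[R_{t+1,a} | R_{t+2:T}]]`. -/
theorem sum_max_condexp_past_eq_future
    {Ω : Type*} [MeasurableSpace Ω]
    (μ : Measure Ω) [IsProbabilityMeasure μ]
    {A : Type*} [Fintype A] [Nonempty A]
    (R : ℕ → Ω → A → ℝ)
    (hmeas : ∀ t, Measurable (R t))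
    (hint : ∀ t a, Integrable (fun ω => R t ω a) μ)
    (hshift : ∀ t n : ℕ,
      Measure.map (fun ω => fun k : Fin n => R (t + 1 + (k : ℕ)) ω) μ =
        Measure.map (fun ω => fun k : Fin n => R (1 + (k : ℕ)) ω) μ)
    (hrev : ∀ T : ℕ,
      Measure.map (fun ω => fun k : Fin T => R ((k : ℕ) + 1) ω) μ =
        Measure.map (fun ω => fun k : Fin T => R (T - (k : ℕ)) ω) μ)
    (T : ℕ) :
    ∑ t ∈ Finset.range T,
        ∫ ω, (⨆ a : A, (μ[(fun ω' => R (t + 1) ω' a) |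
          MeasurableSpace.comap (fun ω' => fun k : Fin t => R ((k : ℕ) + 1) ω')
            inferInstance]) ω) ∂μ =
      ∑ t ∈ Finset.range T,
        ∫ ω, (⨆ a : A, (μ[(fun ω' => R (t + 1) ω' a) |
          MeasurableSpace.comap (fun ω' => fun k : Fin (T - (t + 1)) => R (t + 2 + (k : ℕ)) ω')
            inferInstance]) ω) ∂μ := by
  have hterm : ∀ t, t < T →
      (∫ ω, (⨆ a : A, (μ[(fun ω' => R (t + 1) ω' a) |
          MeasurableSpace.comap (fun ω' => fun k : Fin (T - (t + 1)) => R (t + 2 + (k : ℕ)) ω')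
            inferInstance]) ω) ∂μ)
      = ∫ ω, (⨆ a : A, (μ[(fun ω' => R (T - 1 - t + 1) ω' a) |
          MeasurableSpace.comap (fun ω' => fun k : Fin (T - 1 - t) => R ((k : ℕ) + 1) ω')
            inferInstance]) ω) ∂μ := by
    intro t ht
    obtain ⟨s, hs⟩ : ∃ s, T - 1 - t = s := ⟨_, rfl⟩
    have hTt : T - (t + 1) = s := by omega
    rw [hs, hTt]
    -- measurability of the conditioning vectors
    have hY1 : Measurable (fun ω => fun k : Fin s => R ((k : ℕ) + 1) ω) :=
      measurable_pi_lambda _ fun k => hmeas _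
    have hY2 : Measurable (fun ω => fun k : Fin s => R (t + 2 + (k : ℕ)) ω) :=
      measurable_pi_lambda _ fun k => hmeas _
    rw [integral_iSup_condexp_comap μ (hmeas (t + 1)) (hint (t + 1)) hY2,
        integral_iSup_condexp_comap μ (hmeas (s + 1)) (hint (s + 1)) hY1]
    -- the reversal reindexing map on Fin s
    have hrr : Measurable (fun v : Fin s → A → ℝ => v ∘ Fin.rev) :=
      measurable_pi_lambda _ fun k => measurable_pi_apply _
    have hinv : (fun v : Fin s → A → ℝ => v ∘ Fin.rev) ∘
        (fun v : Fin s → A → ℝ => v ∘ Fin.rev) = id := by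
      funext v k
      show v (Fin.rev (Fin.rev k)) = v k
      rw [Fin.rev_rev]
    have hcomap : MeasurableSpace.comap (fun v : Fin s → A → ℝ => v ∘ Fin.rev)
        inferInstance = (inferInstance : MeasurableSpace (Fin s → A → ℝ)) := by
      refine le_antisymm hrr.comap_le ?_
      have h2 : (inferInstance : MeasurableSpace (Fin s → A → ℝ)) =
          (MeasurableSpace.comap (fun v : Fin s → A → ℝ => v ∘ Fin.rev)
            inferInstance).comap (fun v : Fin s → A → ℝ => v ∘ Fin.rev) := by
        rw [MeasurableSpace.comap_comp, hinv, MeasurableSpace.comap_id]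
      calc (inferInstance : MeasurableSpace (Fin s → A → ℝ)) = _ := h2
        _ ≤ MeasurableSpace.comap (fun v : Fin s → A → ℝ => v ∘ Fin.rev) inferInstance :=
          MeasurableSpace.comap_mono hrr.comap_le
    -- the law identity
    have hV : Measurable (fun ω => fun k : Fin (s + 1) => R (t + 1 + (k : ℕ)) ω) :=
      measurable_pi_lambda _ fun k => hmeas _
    have hW : Measurable (fun ω => fun k : Fin (s + 1) => R ((k : ℕ) + 1) ω) :=
      measurable_pi_lambda _ fun k => hmeas _
    have hφ₁ : Measurable (fun v : Fin (s + 1) → A → ℝ =>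
        (v 0, fun k : Fin s => v k.succ)) :=
      (measurable_pi_apply _).prodMk (measurable_pi_lambda _ fun k => measurable_pi_apply _)
    have hφ₂ : Measurable (fun v : Fin (s + 1) → A → ℝ =>
        (v (Fin.last s), fun k : Fin s => v k.castSucc)) :=
      (measurable_pi_apply _).prodMk (measurable_pi_lambda _ fun k => measurable_pi_apply _)
    have hrr' : Measurable (fun v : Fin (s + 1) → A → ℝ => v ∘ Fin.rev) :=
      measurable_pi_lambda _ fun k => measurable_pi_apply _
    have hPM : Measurable (Prod.map (id : (A → ℝ) → A → ℝ)
        (fun v : Fin s → A → ℝ => v ∘ Fin.rev)) :=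
      measurable_id.prodMap hrr
    have e1 : (fun ω => (R (t + 1) ω, fun k : Fin s => R (t + 2 + (k : ℕ)) ω))
        = (fun v : Fin (s + 1) → A → ℝ => (v 0, fun k : Fin s => v k.succ)) ∘
            (fun ω => fun k : Fin (s + 1) => R (t + 1 + (k : ℕ)) ω) := by
      funext ω
      refine Prod.ext ?_ ?_
      · show R (t + 1) ω = R (t + 1 + ((0 : Fin (s + 1)) : ℕ)) ω
        have : t + 1 + ((0 : Fin (s + 1)) : ℕ) = t + 1 := by
          simp
        rw [this]
      · funext k
        show R (t + 2 + (k : ℕ)) ω = R (t + 1 + ((k.succ : Fin (s + 1)) : ℕ)) ω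
        have : t + 1 + ((k.succ : Fin (s + 1)) : ℕ) = t + 2 + (k : ℕ) := by
          simp only [Fin.val_succ]
          omega
        rw [this]
    have e2 : (fun ω => fun k : Fin (s + 1) => R (1 + (k : ℕ)) ω)
        = (fun ω => fun k : Fin (s + 1) => R ((k : ℕ) + 1) ω) := by
      funext ω k
      rw [Nat.add_comm]
    have e3 : (fun ω => fun k : Fin (s + 1) => R ((s + 1) - (k : ℕ)) ω)
        = (fun v : Fin (s + 1) → A → ℝ => v ∘ Fin.rev) ∘
            (fun ω => fun k : Fin (s + 1) => R ((k : ℕ) + 1) ω) := by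
      funext ω k
      show R ((s + 1) - (k : ℕ)) ω = R (((Fin.rev k : Fin (s + 1)) : ℕ) + 1) ω
      have hk := k.isLt
      have : ((Fin.rev k : Fin (s + 1)) : ℕ) + 1 = (s + 1) - (k : ℕ) := by
        simp only [Fin.val_rev]
        omega
      rw [this]
    have e4 : (fun v : Fin (s + 1) → A → ℝ => (v 0, fun k : Fin s => v k.succ)) ∘
          (fun v : Fin (s + 1) → A → ℝ => v ∘ Fin.rev)
        = (Prod.map id (fun v : Fin s → A → ℝ => v ∘ Fin.rev)) ∘
          (fun v : Fin (s + 1) → A → ℝ =>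
            (v (Fin.last s), fun k : Fin s => v k.castSucc)) := by
      funext v
      refine Prod.ext ?_ ?_
      · show v (Fin.rev 0) = v (Fin.last s)
        have : Fin.rev (0 : Fin (s + 1)) = Fin.last s := by
          ext
          simp [Fin.val_rev]
        rw [this]
      · funext k
        show v (Fin.rev k.succ) = v ((Fin.rev k).castSucc)
        have : Fin.rev (k.succ) = (Fin.rev k).castSucc := by
          ext
          simp only [Fin.val_rev, Fin.val_succ, Fin.coe_castSucc]
          omega
        rw [this]
    have e5 : (fun v : Fin (s + 1) → A → ℝ =>
          (v (Fin.last s), fun k : Fin s => v k.castSucc)) ∘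
          (fun ω => fun k : Fin (s + 1) => R ((k : ℕ) + 1) ω)
        = (fun ω => (R (s + 1) ω, fun k : Fin s => R ((k : ℕ) + 1) ω)) := by
      funext ω
      refine Prod.ext ?_ ?_
      · show R (((Fin.last s : Fin (s + 1)) : ℕ) + 1) ω = R (s + 1) ω
        rw [Fin.val_last]
      · funext k
        show R (((k.castSucc : Fin (s + 1)) : ℕ) + 1) ω = R ((k : ℕ) + 1) ω
        rw [Fin.coe_castSucc]
    have hlaw : μ.map (fun ω => (R (t + 1) ω, fun k : Fin s => R (t + 2 + (k : ℕ)) ω))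
        = (μ.map (fun ω => (R (s + 1) ω, fun k : Fin s => R ((k : ℕ) + 1) ω))).map
            (Prod.map id (fun v : Fin s → A → ℝ => v ∘ Fin.rev)) := by
      calc μ.map (fun ω => (R (t + 1) ω, fun k : Fin s => R (t + 2 + (k : ℕ)) ω))
          = (μ.map (fun ω => fun k : Fin (s + 1) => R (t + 1 + (k : ℕ)) ω)).map
              (fun v : Fin (s + 1) → A → ℝ => (v 0, fun k : Fin s => v k.succ)) := by
            rw [Measure.map_map hφ₁ hV, ← e1]
        _ = (μ.map (fun ω => fun k : Fin (s + 1) => R ((k : ℕ) + 1) ω)).map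
              (fun v : Fin (s + 1) → A → ℝ => (v 0, fun k : Fin s => v k.succ)) := by
            rw [hshift t (s + 1), e2]
        _ = (μ.map ((fun v : Fin (s + 1) → A → ℝ => v ∘ Fin.rev) ∘
              (fun ω => fun k : Fin (s + 1) => R ((k : ℕ) + 1) ω))).map
              (fun v : Fin (s + 1) → A → ℝ => (v 0, fun k : Fin s => v k.succ)) := by
            rw [hrev (s + 1), e3]
        _ = ((μ.map (fun ω => fun k : Fin (s + 1) => R ((k : ℕ) + 1) ω)).map
              (fun v : Fin (s + 1) → A → ℝ => v ∘ Fin.rev)).map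
              (fun v : Fin (s + 1) → A → ℝ => (v 0, fun k : Fin s => v k.succ)) := by
            rw [Measure.map_map hrr' hW]
        _ = (μ.map (fun ω => fun k : Fin (s + 1) => R ((k : ℕ) + 1) ω)).map
              ((fun v : Fin (s + 1) → A → ℝ => (v 0, fun k : Fin s => v k.succ)) ∘
                (fun v : Fin (s + 1) → A → ℝ => v ∘ Fin.rev)) :=
            Measure.map_map hφ₁ hrr'
        _ = (μ.map (fun ω => fun k : Fin (s + 1) => R ((k : ℕ) + 1) ω)).map
              ((Prod.map id (fun v : Fin s → A → ℝ => v ∘ Fin.rev)) ∘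
                (fun v : Fin (s + 1) → A → ℝ =>
                  (v (Fin.last s), fun k : Fin s => v k.castSucc))) := by
            rw [e4]
        _ = ((μ.map (fun ω => fun k : Fin (s + 1) => R ((k : ℕ) + 1) ω)).map
              (fun v : Fin (s + 1) → A → ℝ =>
                (v (Fin.last s), fun k : Fin s => v k.castSucc))).map
              (Prod.map id (fun v : Fin s → A → ℝ => v ∘ Fin.rev)) :=
            (Measure.map_map hPM hφ₂).symm
        _ = (μ.map (fun ω => (R (s + 1) ω, fun k : Fin s => R ((k : ℕ) + 1) ω))).map
              (Prod.map id (fun v : Fin s → A → ℝ => v ∘ Fin.rev)) := by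
            rw [Measure.map_map hφ₂ hW, e5]
    haveI : IsProbabilityMeasure
        (μ.map (fun ω => (R (s + 1) ω, fun k : Fin s => R ((k : ℕ) + 1) ω))) :=
      Measure.isProbabilityMeasure_map ((hmeas _).prodMk hY1).aemeasurable
    have hXi : ∀ a, Integrable (fun p : (A → ℝ) × (Fin s → A → ℝ) => p.1 a)
        (μ.map (fun ω => (R (s + 1) ω, fun k : Fin s => R ((k : ℕ) + 1) ω))) := fun a =>
      (integrable_map_measure
        (((measurable_pi_apply a).comp measurable_fst).aestronglyMeasurable)
        ((hmeas _).prodMk hY1).aemeasurable).mpr (hint (s + 1) a)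
    rw [hlaw, Dval_map_reindex _ hXi hrr hcomap]
  calc ∑ t ∈ Finset.range T,
        ∫ ω, (⨆ a : A, (μ[(fun ω' => R (t + 1) ω' a) |
          MeasurableSpace.comap (fun ω' => fun k : Fin t => R ((k : ℕ) + 1) ω')
            inferInstance]) ω) ∂μ
      = ∑ t ∈ Finset.range T,
        (fun u => ∫ ω, (⨆ a : A, (μ[(fun ω' => R (u + 1) ω' a) |
          MeasurableSpace.comap (fun ω' => fun k : Fin u => R ((k : ℕ) + 1) ω')
            inferInstance]) ω) ∂μ) (T - 1 - t) :=
        (Finset.sum_range_reflect (fun u => ∫ ω, (⨆ a : A, (μ[(fun ω' => R (u + 1) ω' a) |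
          MeasurableSpace.comap (fun ω' => fun k : Fin u => R ((k : ℕ) + 1) ω')
            inferInstance]) ω) ∂μ) T).symm
    _ = ∑ t ∈ Finset.range T,
        ∫ ω, (⨆ a : A, (μ[(fun ω' => R (t + 1) ω' a) |
          MeasurableSpace.comap (fun ω' => fun k : Fin (T - (t + 1)) => R (t + 2 + (k : ℕ)) ω')
            inferInstance]) ω) ∂μ := by
        refine Finset.sum_congr rfl fun t ht => ?_
        exact (hterm t (Finset.mem_range.mp ht)).symm
end

section
/- Suppose for each t < T, E[R_{t+1,*} − R_{t+1,A_t}]_+² ≤ Γ̄ · I(R_{t+2:∞}; A_t, R_{t+1,A_t} | H_t), and ∑_{t=0}^{T−1} I(R_{t+2:∞}; A_t, R_{t+1,A_t} | H_t) ≤ ∑_{t=0}^{T−1} Δ_t. Then the regret ∑_{t=0}^{T−1} E[R_{t+1,*} − R_{t+1,A_t}] ≤ sqrt(Γ̄ · T · ∑_{t=0}^{T−1} Δ_t). -/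
/-! Cauchy–Schwarz bounds the summed positive parts of the per-step regrets by
`√(T · ∑ (reg_t)₊²)`, and the hypotheses bound `∑ (reg_t)₊²` by `Γ · ∑ info_t ≤ Γ · ∑ Δ_t`. -/

open Finset Real

theorem Finset.sum_le_sqrt_card_mul_of_sum_sq_le {ι : Type*} (s : Finset ι) (f : ι → ℝ) {B : ℝ}
    (h : ∑ i ∈ s, f i ^ 2 ≤ B) : ∑ i ∈ s, f i ≤ √(#s * B) :=
  le_sqrt_of_sq_le <| sq_sum_le_card_mul_sum_sq.trans <| by gcongr

theorem regret_le_sqrt_general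
    (T : ℕ) (reg info Δ : ℕ → ℝ) (Γ : ℝ)
    (hΓ : 0 ≤ Γ)
    (hratio : ∀ t < T, (max (reg t) 0) ^ 2 ≤ Γ * info t)
    (hsum : ∑ t ∈ Finset.range T, info t ≤ ∑ t ∈ Finset.range T, Δ t) :
    ∑ t ∈ Finset.range T, reg t ≤
      Real.sqrt (Γ * T * ∑ t ∈ Finset.range T, Δ t) := by
  have hsq : ∑ t ∈ range T, max (reg t) 0 ^ 2 ≤ Γ * ∑ t ∈ range T, Δ t :=
    calc ∑ t ∈ range T, max (reg t) 0 ^ 2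
        ≤ ∑ t ∈ range T, Γ * info t := sum_le_sum fun t ht => hratio t (mem_range.mp ht)
      _ = Γ * ∑ t ∈ range T, info t := (mul_sum ..).symm
      _ ≤ Γ * ∑ t ∈ range T, Δ t := mul_le_mul_of_nonneg_left hsum hΓ
  calc ∑ t ∈ range T, reg t
      ≤ ∑ t ∈ range T, max (reg t) 0 := sum_le_sum fun t _ => le_max_left _ _
    _ ≤ √(#(range T) * (Γ * ∑ t ∈ range T, Δ t)) := sum_le_sqrt_card_mul_of_sum_sq_le _ _ hsq
    _ = √(Γ * T * ∑ t ∈ range T, Δ t) := by rw [card_range, ← mul_assoc, mul_comm (T : ℝ)]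

/-- if for each `t < T` the positive part of the per-step regret squared is
bounded by `Γ̄` times the per-step information gain `info_t = I(R_{t+2:∞}; A_t, R_{t+1,A_t}|H_t)`,
and the total information gain is at most `∑ Δ_t`, then the regret
`∑_{t<T} reg_t` is at most `sqrt (Γ̄ · T · ∑_{t<T} Δ_t)`. -/
theorem regret_le_sqrt
    (T : ℕ) (reg info Δ : ℕ → ℝ) (Γ : ℝ)
    (hΓ : 0 ≤ Γ)
    (hinfo : ∀ t < T, 0 ≤ info t)
    (hΔ : ∀ t < T, 0 ≤ Δ t)
    (hratio : ∀ t < T, (max (reg t) 0) ^ 2 ≤ Γ * info t)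
    (hsum : ∑ t ∈ Finset.range T, info t ≤ ∑ t ∈ Finset.range T, Δ t) :
    ∑ t ∈ Finset.range T, reg t ≤
      Real.sqrt (Γ * T * ∑ t ∈ Finset.range T, Δ t) :=
  regret_le_sqrt_general T reg info Δ Γ hΓ hratio hsum
end
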